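/- arXiv:1810.01580 — 3 statements merged into one kernel-verified Lean document; each statement's English description precedes it below -/
import Mathlib

section
/- Let (X,d,μ) be a metric measure space with doubling μ satisfying μ(B(c,r'))/μ(B(c,r)) ≲ (r'/r)^σ for some σ > 0, c ∈ X and all 0 < r' ≤ r ≤ 2 diam X. Let -σ < α ≤ 0 and w(x) = d(x,c)^α. Then w is an A_1 weight with respect to μ: for every ball B ⊂ X, ⨍_B w dμ ≤ C ess inf_B w. -/
/-!
On a ball `B(z,r)` far from `c` (`2r ≤ d(z,c)`) the weight `w = d(·,c)^α` varies by at most the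
factor `3^(-α)`. On a ball near `c` we choose an admissible radius `R` with `B(z,r) ⊆ B̄(c,R)` and
`μ(B(c,R)) ≲ μ(B(z,r))` by doubling; then `ess inf w ≥ R^α`, and since `{w > t} ⊆ B(c, t^(1/α))`,
the layer-cake formula and the decay condition give
`∫_B w ≤ R^α μ(B) + C R^(-σ) μ(B(c,R)) ∫_{R^α}^∞ t^(σ/α) dt`
`= R^α μ(B) + C (-α/(σ+α)) R^α μ(B(c,R))`;
the tail integral converges because `σ/α < -1`, i.e. `α > -σ`.
-/

open MeasureTheory Metric Set ENNReal Filter Topology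

section EssInfAverage

variable {α : Type*} [MeasurableSpace α] {μ : Measure α}

theorem exists_frequently_ae_le (hμ : μ ≠ 0) (f : α → ℝ) : ∃ a : ℝ, ∃ᵐ x ∂μ, f x ≤ a := by
  by_contra! h
  have hnull : ∀ n : ℕ, μ {x | f x ≤ n} = 0 := fun n => by
    simpa [ae_iff] using h n
  have hcover : (⋃ n : ℕ, {x | f x ≤ n}) = univ :=
    iUnion_eq_univ_iff.2 fun x => ⟨⌈f x⌉₊, Nat.le_ceil (f x)⟩
  exact hμ (Measure.measure_univ_eq_zero.1 (hcover ▸ measure_iUnion_null hnull))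

theorem le_essInf_real_of_ae_le (hμ : μ ≠ 0) {f : α → ℝ} {c : ℝ} (h : ∀ᵐ x ∂μ, c ≤ f x) :
    c ≤ essInf f μ :=
  le_essInf_of_ae_le c h
    (IsCoboundedUnder.of_frequently_le (exists_frequently_ae_le hμ f).choose_spec)

theorem ae_restrict_of_forall_mem_of_notMem_null {s N : Set α} {p : α → Prop}
    (hp : NullMeasurableSet {x | p x} (μ.restrict s)) (hN : μ N = 0)
    (h : ∀ x ∈ s, x ∉ N → p x) : ∀ᵐ x ∂μ.restrict s, p x := by
  rw [ae_iff]
  refine (Measure.restrict_apply₀ hp.compl).trans ?_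
  exact measure_mono_null (fun x ⟨hx, hxs⟩ => by_contra fun hxN => hx (h x hxs hxN)) hN

theorem setAverage_le_of_lintegral_le {s : Set α} {f : α → ℝ} (hf0 : 0 ≤ᵐ[μ.restrict s] f)
    (hf : AEStronglyMeasurable f (μ.restrict s)) {M : ℝ} (hM : 0 ≤ M) (hs : μ s ≠ ⊤)
    (h : ∫⁻ x in s, ENNReal.ofReal (f x) ∂μ ≤ ENNReal.ofReal M * μ s) :
    ⨍ x in s, f x ∂μ ≤ M := by
  rw [setAverage_eq, smul_eq_mul, integral_eq_lintegral_of_nonneg_ae hf0 hf]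
  rcases eq_or_ne (μ s) 0 with hs0 | hs0
  · simp [Measure.real, hs0, hM]
  calc (μ.real s)⁻¹ * (∫⁻ x in s, ENNReal.ofReal (f x) ∂μ).toReal
      ≤ (μ.real s)⁻¹ * (ENNReal.ofReal M * μ s).toReal := by
        gcongr
        exact mul_ne_top ofReal_ne_top hs
    _ = M := by
        rw [toReal_mul, toReal_ofReal hM, ← Measure.real, mul_comm M,
          inv_mul_cancel_left₀ ((measureReal_ne_zero_iff hs).2 hs0)]

theorem setAverage_le_mul_essInf {s : Set α} (hs0 : μ s ≠ 0) (hs : μ s ≠ ⊤) {f : α → ℝ}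
    (hf : AEStronglyMeasurable f (μ.restrict s)) {m K : ℝ} (hm0 : 0 ≤ m) (hK : 0 ≤ K)
    (hm : ∀ᵐ x ∂μ.restrict s, m ≤ f x)
    (h : ∫⁻ x in s, ENNReal.ofReal (f x) ∂μ ≤ ENNReal.ofReal (K * m) * μ s) :
    ⨍ x in s, f x ∂μ ≤ K * essInf f (μ.restrict s) := by
  have hμs : μ.restrict s ≠ 0 := by rwa [Ne, Measure.restrict_eq_zero]
  calc ⨍ x in s, f x ∂μ ≤ K * m :=
        setAverage_le_of_lintegral_le (hm.mono fun x hx => hm0.trans hx) hf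
          (mul_nonneg hK hm0) hs h
    _ ≤ K * essInf f (μ.restrict s) := by gcongr; exact le_essInf_real_of_ae_le hμs hm

theorem lintegral_ofReal_le_of_meas_lt_le_rpow {f : α → ℝ} (hf0 : 0 ≤ᵐ[μ] f)
    (hf : AEMeasurable f μ) {T p : ℝ} (hT : 0 < T) (hp : p < -1) {A : ℝ≥0∞}
    (h : ∀ t ∈ Ioi T, μ {x | t < f x} ≤ A * ENNReal.ofReal (t ^ p)) :
    ∫⁻ x, ENNReal.ofReal (f x) ∂μ ≤
      ENNReal.ofReal T * μ univ + A * ENNReal.ofReal (-T ^ (p + 1) / (p + 1)) := by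
  rw [lintegral_eq_lintegral_meas_lt μ hf0 hf, ← Ioc_union_Ioi_eq_Ioi hT.le,
    lintegral_union measurableSet_Ioi Ioc_disjoint_Ioi_same]
  gcongr ?_ + ?_
  · calc ∫⁻ t in Ioc 0 T, μ {x | t < f x} ≤ ∫⁻ _ in Ioc 0 T, μ univ :=
          lintegral_mono fun t => measure_mono (subset_univ _)
      _ = ENNReal.ofReal T * μ univ := by
          rw [setLIntegral_const, Real.volume_Ioc, sub_zero, mul_comm]
  · have hnonneg : 0 ≤ᵐ[volume.restrict (Ioi T)] fun t : ℝ => t ^ p := by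
      filter_upwards [ae_restrict_mem measurableSet_Ioi] with t ht
      exact Real.rpow_nonneg (hT.trans ht).le p
    calc ∫⁻ t in Ioi T, μ {x | t < f x} ≤ ∫⁻ t in Ioi T, A * ENNReal.ofReal (t ^ p) :=
          setLIntegral_mono (by fun_prop) h
      _ = A * ∫⁻ t in Ioi T, ENNReal.ofReal (t ^ p) := lintegral_const_mul _ (by fun_prop)
      _ = A * ENNReal.ofReal (-T ^ (p + 1) / (p + 1)) := by
          rw [← ofReal_integral_eq_lintegral_ofReal (integrableOn_Ioi_rpow_of_lt hp hT) hnonneg,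
            integral_Ioi_rpow_of_lt hp hT]

end EssInfAverage

section PowerWeight

variable {X : Type*} [PseudoMetricSpace X] {c z : X} {C CD σ α r R : ℝ}

theorem setOf_lt_rpow_dist_subset_ball (hα : α < 0) {t : ℝ} (ht : 0 < t) :
    {x | t < dist x c ^ α} ⊆ ball c (t ^ α⁻¹) := by
  intro x (hx : t < dist x c ^ α)
  calc dist x c = (dist x c ^ α) ^ α⁻¹ := (Real.rpow_rpow_inv dist_nonneg hα.ne).symm
    _ < t ^ α⁻¹ := Real.rpow_lt_rpow_of_neg ht hx (inv_lt_zero.2 hα)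

theorem exists_radius_of_dist_lt (hD : ediam (univ : Set X) ≠ 0) (hr : 0 < r)
    (hnear : dist z c < 2 * r) :
    ∃ R, 0 < R ∧ ENNReal.ofReal R ≤ 2 * ediam (univ : Set X) ∧
      ball z r ⊆ closedBall c R ∧ ball c R ⊆ ball z (2 ^ 3 * r) := by
  set D := ediam (univ : Set X)
  have hmin : min (ENNReal.ofReal (3 * r)) (2 * D) ≠ ⊤ :=
    (min_le_left _ _).trans_lt ofReal_lt_top |>.ne
  refine ⟨(min (ENNReal.ofReal (3 * r)) (2 * D)).toReal, toReal_pos ?_ hmin, ?_, ?_, ?_⟩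
  · simp [hD, hr]
  · rw [ofReal_toReal hmin]
    exact min_le_right _ _
  · intro x hx
    rw [mem_closedBall, ← ofReal_le_iff_le_toReal hmin, ← edist_dist]
    refine le_min ?_ ?_
    · rw [edist_dist]
      exact ofReal_le_ofReal (by linarith [dist_triangle x z c, mem_ball.1 hx])
    · calc edist x c ≤ D := edist_le_ediam_of_mem (mem_univ x) (mem_univ c)
        _ ≤ 2 * D := le_mul_of_one_le_left' (by norm_num)
  · have hR : (min (ENNReal.ofReal (3 * r)) (2 * D)).toReal ≤ 3 * r :=
      toReal_le_of_le_ofReal (by positivity) (min_le_left _ _)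
    intro x hx
    rw [mem_ball] at hx ⊢
    linarith [dist_triangle x c z, dist_comm z c]

variable [MeasurableSpace X] {μ : Measure X}

theorem measure_ball_two_pow_mul_le
    (hdoub : ∀ (x : X) (r : ℝ), 0 < r →
      μ (ball x (2 * r)) ≤ ENNReal.ofReal CD * μ (ball x r))
    (hr : 0 < r) (n : ℕ) : μ (ball z (2 ^ n * r)) ≤ ENNReal.ofReal CD ^ n * μ (ball z r) := by
  induction n with
  | zero => simp
  | succ n ih =>
    calc μ (ball z (2 ^ (n + 1) * r)) = μ (ball z (2 * (2 ^ n * r))) := by ring_nf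
      _ ≤ ENNReal.ofReal CD * μ (ball z (2 ^ n * r)) := hdoub z _ (by positivity)
      _ ≤ ENNReal.ofReal CD * (ENNReal.ofReal CD ^ n * μ (ball z r)) := by gcongr
      _ = ENNReal.ofReal CD ^ (n + 1) * μ (ball z r) := by ring

theorem measure_closedBall_zero_eq_zero_of_decay (hσ : 0 < σ) (hR : 0 < R) (hfin : μ (ball c R) ≠ ⊤)
    (hdecay : ∀ r, 0 < r → r ≤ R →
      μ (ball c r) ≤ ENNReal.ofReal (C * (r / R) ^ σ) * μ (ball c R)) :
    μ (closedBall c 0) = 0 := by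
  have hcont : ContinuousAt (fun r : ℝ => C * (r / R) ^ σ) 0 :=
    continuousAt_const.mul ((continuousAt_id.div_const R).rpow_const (Or.inr hσ.le))
  have htend : Tendsto (fun r => ENNReal.ofReal (C * (r / R) ^ σ) * μ (ball c R))
      (𝓝[>] 0) (𝓝 0) := by
    have h0 := ENNReal.Tendsto.mul_const
      (ENNReal.tendsto_ofReal (hcont.tendsto.mono_left (nhdsWithin_le_nhds (s := Ioi 0))))
      (Or.inr hfin)
    simpa [Real.zero_rpow hσ.ne'] using h0
  refine le_antisymm (ge_of_tendsto htend ?_) zero_le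
  filter_upwards [Ioc_mem_nhdsGT hR] with r ⟨hr, hrR⟩
  exact (measure_mono (closedBall_subset_ball hr)).trans (hdecay r hr hrR)

theorem lintegral_rpow_dist_le (hC : 0 ≤ C) (hα : α < 0) (hσα : 0 < σ + α) (hR : 0 < R)
    (hdecay : ∀ r, 0 < r → r ≤ R →
      μ (ball c r) ≤ ENNReal.ofReal (C * (r / R) ^ σ) * μ (ball c R))
    {s : Set X} (hw : AEMeasurable (fun x => dist x c ^ α) (μ.restrict s)) :
    ∫⁻ x in s, ENNReal.ofReal (dist x c ^ α) ∂μ ≤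
      ENNReal.ofReal (R ^ α) * μ s +
        ENNReal.ofReal (C * (-α / (σ + α)) * R ^ α) * μ (ball c R) := by
  have hRα : 0 < R ^ α := Real.rpow_pos_of_pos hR α
  have hp : σ / α < -1 := by rw [div_lt_iff_of_neg hα]; linarith
  have htail : ∀ t ∈ Ioi (R ^ α), μ.restrict s {x | t < dist x c ^ α} ≤
      ENNReal.ofReal (C / R ^ σ) * μ (ball c R) * ENNReal.ofReal (t ^ (σ / α)) := by
    intro t (ht : R ^ α < t)
    have ht0 : 0 < t := hRα.trans ht
    have hρR : t ^ α⁻¹ ≤ R := by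
      have h := Real.rpow_lt_rpow_of_neg hRα ht (inv_lt_zero.2 hα)
      rw [Real.rpow_rpow_inv hR.le hα.ne] at h
      exact h.le
    calc μ.restrict s {x | t < dist x c ^ α} ≤ μ {x | t < dist x c ^ α} :=
          Measure.le_iff'.1 Measure.restrict_le_self _
      _ ≤ μ (ball c (t ^ α⁻¹)) := measure_mono (setOf_lt_rpow_dist_subset_ball hα ht0)
      _ ≤ ENNReal.ofReal (C * (t ^ α⁻¹ / R) ^ σ) * μ (ball c R) :=
          hdecay _ (Real.rpow_pos_of_pos ht0 _) hρR
      _ = ENNReal.ofReal (C / R ^ σ) * μ (ball c R) * ENNReal.ofReal (t ^ (σ / α)) := by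
          rw [mul_right_comm, ← ofReal_mul (div_nonneg hC (Real.rpow_nonneg hR.le σ)),
            Real.div_rpow (Real.rpow_nonneg ht0.le _) hR.le, ← Real.rpow_mul ht0.le,
            inv_mul_eq_div]
          ring_nf
  have hconst : C / R ^ σ * (-(R ^ α) ^ (σ / α + 1) / (σ / α + 1)) =
      C * (-α / (σ + α)) * R ^ α := by
    rw [← Real.rpow_mul hR.le, mul_add, mul_div_cancel₀ σ hα.ne, mul_one,
      Real.rpow_add hR, div_add_one hα.ne]
    have := hσα.ne'
    field_simp
  calc ∫⁻ x in s, ENNReal.ofReal (dist x c ^ α) ∂μ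
      ≤ ENNReal.ofReal (R ^ α) * μ.restrict s univ + ENNReal.ofReal (C / R ^ σ) * μ (ball c R) *
          ENNReal.ofReal (-(R ^ α) ^ (σ / α + 1) / (σ / α + 1)) :=
        lintegral_ofReal_le_of_meas_lt_le_rpow
          (ae_of_all _ fun x => Real.rpow_nonneg dist_nonneg α) hw hRα hp htail
    _ = ENNReal.ofReal (R ^ α) * μ s +
        ENNReal.ofReal (C * (-α / (σ + α)) * R ^ α) * μ (ball c R) := by
      rw [Measure.restrict_apply_univ, mul_right_comm,
        ← ofReal_mul (div_nonneg hC (Real.rpow_nonneg hR.le σ)), hconst]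

theorem setAverage_rpow_dist_le_of_subset_closedBall (hC : 0 ≤ C) (hσ : 0 < σ) (hα : α < 0)
    (hσα : 0 < σ + α) (hR : 0 < R) (hfin : μ (ball c R) ≠ ⊤)
    (hdecay : ∀ r, 0 < r → r ≤ R →
      μ (ball c r) ≤ ENNReal.ofReal (C * (r / R) ^ σ) * μ (ball c R))
    {s : Set X} (hs : s ⊆ closedBall c R) (hs0 : μ s ≠ 0) (hstop : μ s ≠ ⊤) {L : ℝ}
    (hL : 0 ≤ L) (hcomp : μ (ball c R) ≤ ENNReal.ofReal L * μ s)
    (hw : AEMeasurable (fun x => dist x c ^ α) (μ.restrict s)) :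
    ⨍ x in s, dist x c ^ α ∂μ ≤
      (1 + C * (-α / (σ + α)) * L) * essInf (fun x => dist x c ^ α) (μ.restrict s) := by
  have hRα : 0 ≤ R ^ α := Real.rpow_nonneg hR.le α
  have hCα : 0 ≤ C * (-α / (σ + α)) := mul_nonneg hC (div_nonneg (by linarith) hσα.le)
  refine setAverage_le_mul_essInf hs0 hstop hw.aestronglyMeasurable hRα (by positivity) ?_ ?_
  · -- `0 ^ α = 0` is a junk value of `rpow`; it is harmless because `closedBall c 0` is null.
    refine ae_restrict_of_forall_mem_of_notMem_null (nullMeasurableSet_le aemeasurable_const hw)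
      (measure_closedBall_zero_eq_zero_of_decay hσ hR hfin hdecay) fun x hx hxc => ?_
    exact Real.rpow_le_rpow_of_nonpos (not_le.1 hxc) (hs hx) hα.le
  calc ∫⁻ x in s, ENNReal.ofReal (dist x c ^ α) ∂μ
      ≤ ENNReal.ofReal (R ^ α) * μ s +
          ENNReal.ofReal (C * (-α / (σ + α)) * R ^ α) * μ (ball c R) :=
        lintegral_rpow_dist_le hC hα hσα hR hdecay hw
    _ ≤ ENNReal.ofReal (R ^ α) * μ s +
          ENNReal.ofReal (C * (-α / (σ + α)) * R ^ α) * (ENNReal.ofReal L * μ s) := by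
        gcongr
    _ = ENNReal.ofReal ((1 + C * (-α / (σ + α)) * L) * R ^ α) * μ s := by
        rw [← mul_assoc, ← ofReal_mul (by positivity), ← add_mul,
          ← ofReal_add hRα (by positivity)]
        ring_nf

theorem setAverage_rpow_dist_le_of_le_dist (hα : α ≤ 0) (hr : 0 < r) (hfar : 2 * r ≤ dist z c)
    (hB0 : μ (ball z r) ≠ 0) (hBtop : μ (ball z r) ≠ ⊤)
    (hw : AEMeasurable (fun x => dist x c ^ α) (μ.restrict (ball z r))) :
    ⨍ x in ball z r, dist x c ^ α ∂μ ≤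
      3 ^ (-α) * essInf (fun x => dist x c ^ α) (μ.restrict (ball z r)) := by
  set m := (3 / 2 * dist z c) ^ α
  have hbounds : ∀ x ∈ ball z r, m ≤ dist x c ^ α ∧ dist x c ^ α ≤ 3 ^ (-α) * m := by
    intro x hx
    have hxz : dist x z < r := mem_ball.1 hx
    have hlow : dist z c / 2 ≤ dist x c := by linarith [dist_triangle z x c, dist_comm x z]
    have hhigh : dist x c ≤ 3 / 2 * dist z c := by linarith [dist_triangle x z c]
    refine ⟨Real.rpow_le_rpow_of_nonpos (by linarith) hhigh hα, ?_⟩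
    calc dist x c ^ α ≤ (dist z c / 2) ^ α := Real.rpow_le_rpow_of_nonpos (by linarith) hlow hα
      _ = 3 ^ (-α) * m := by
        rw [Real.rpow_neg (by norm_num), ← Real.inv_rpow (by norm_num),
          ← Real.mul_rpow (by norm_num) (by linarith)]
        ring_nf
  refine setAverage_le_mul_essInf hB0 hBtop hw.aestronglyMeasurable (m := m)
    (Real.rpow_nonneg (by linarith) α) (by positivity) ?_ ?_
  · exact ae_restrict_of_forall_mem_of_notMem_null (nullMeasurableSet_le aemeasurable_const hw)
      measure_empty fun x hx _ => (hbounds x hx).1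
  calc ∫⁻ x in ball z r, ENNReal.ofReal (dist x c ^ α) ∂μ
      ≤ ∫⁻ _ in ball z r, ENNReal.ofReal (3 ^ (-α) * m) ∂μ := by
        refine lintegral_mono_ae ?_
        filter_upwards [ae_restrict_of_forall_mem_of_notMem_null
          (nullMeasurableSet_le hw aemeasurable_const) measure_empty
          fun x hx _ => (hbounds x hx).2] with x hx
        exact ofReal_le_ofReal hx
    _ = ENNReal.ofReal (3 ^ (-α) * m) * μ (ball z r) := setLIntegral_const _ _

end PowerWeight

/-- If `μ` is doubling and satisfies the power decay
`μ(B(c,r'))/μ(B(c,r)) ≲ (r'/r)^σ` for balls centered at `c`, and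
`-σ < α ≤ 0`, then `w = d(·,c)^α` is a Muckenhoupt `A_1` weight:
`⨍_B w dμ ≤ C' essinf_B w` for every ball `B ⊂ X`. -/
theorem power_weight_is_A1 {X : Type*} [MetricSpace X] [MeasurableSpace X]
    (μ : Measure X) (c : X)
    (hball : ∀ (x : X) (r : ℝ), 0 < r → 0 < μ (Metric.ball x r) ∧ μ (Metric.ball x r) < ⊤)
    (CD : ℝ) (hCD : 0 < CD)
    (hdoub : ∀ (x : X) (r : ℝ), 0 < r →
      μ (Metric.ball x (2 * r)) ≤ ENNReal.ofReal CD * μ (Metric.ball x r))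
    (C σ : ℝ) (hC : 0 < C) (hσ : 0 < σ)
    (hdecay : ∀ r' r : ℝ, 0 < r' → r' ≤ r →
      ENNReal.ofReal r ≤ 2 * EMetric.diam (Set.univ : Set X) →
      μ (Metric.ball c r') ≤ ENNReal.ofReal (C * (r' / r) ^ σ) * μ (Metric.ball c r))
    (α : ℝ) (hα1 : -σ < α) (hα2 : α ≤ 0) :
    ∃ C' : ℝ, 0 < C' ∧ ∀ (z : X) (r : ℝ), 0 < r →
      ⨍ x in Metric.ball z r, dist x c ^ α ∂μ ≤
        C' * essInf (fun x => dist x c ^ α) (μ.restrict (Metric.ball z r)) := by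
  have hσα : 0 < σ + α := by linarith
  refine ⟨max (3 ^ (-α)) (1 + C * (-α / (σ + α)) * CD ^ 3),
    lt_max_of_lt_left (by positivity), fun z r hr => ?_⟩
  obtain ⟨hB0, hBtop⟩ := hball z r hr
  have hν : μ.restrict (ball z r) ≠ 0 := fun h => hB0.ne' (Measure.restrict_eq_zero.1 h)
  have hess : 0 ≤ essInf (fun x => dist x c ^ α) (μ.restrict (ball z r)) :=
    le_essInf_real_of_ae_le hν (ae_of_all _ fun x => Real.rpow_nonneg dist_nonneg α)
  rcases hα2.eq_or_lt with rfl | hα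
  · simp only [Real.rpow_zero]
    rw [setAverage_const hB0.ne' hBtop.ne, essInf_const _ hν]
    simp
  by_cases hw : AEMeasurable (fun x => dist x c ^ α) (μ.restrict (ball z r))
  swap
  · rw [setAverage_eq, integral_undef fun h => hw h.aemeasurable, smul_zero]
    positivity
  rcases le_or_gt (2 * r) (dist z c) with hfar | hnear
  · exact (setAverage_rpow_dist_le_of_le_dist hα2 hr hfar hB0.ne' hBtop.ne hw).trans
      (mul_le_mul_of_nonneg_right (le_max_left _ _) hess)
  rcases eq_or_ne (ediam (univ : Set X)) 0 with hD | hD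
  · -- `X` is a point: the decay hypothesis is vacuous, but `w ≡ 0 ^ α = 0`.
    have hzero : (fun x => dist x c ^ α) = fun _ => 0 := funext fun x => by
      rw [ediam_eq_zero_iff.1 hD (mem_univ x) (mem_univ c), dist_self, Real.zero_rpow hα.ne]
    rw [hzero, setAverage_const hB0.ne' hBtop.ne, essInf_const _ hν, mul_zero]
  obtain ⟨R, hR, hRD, hBR, hRB⟩ := exists_radius_of_dist_lt hD hr hnear
  have hcomp : μ (ball c R) ≤ ENNReal.ofReal (CD ^ 3) * μ (ball z r) := by
    rw [ofReal_pow hCD.le]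
    exact (measure_mono hRB).trans (measure_ball_two_pow_mul_le hdoub hr 3)
  exact (setAverage_rpow_dist_le_of_subset_closedBall hC.le hσ hα hσα hR (hball c R hR).2.ne
    (fun r' hr' hr'R => hdecay r' R hr' hr'R hRD) hBR hB0.ne' hBtop.ne (by positivity) hcomp
    hw).trans (mul_le_mul_of_nonneg_right (le_max_right _ _) hess)
end

section
/- Let (X,d,μ) be an unbounded metric measure space, a ∈ X, p > 1, and (Ẋ, d̂_a, μ̂_a) the sphericalization with dμ̂_a(x) = dμ(x)/(1+d(x,a))^{2p}. For any open Ω ⊂ X and measurable u: Ω → [-∞,∞], ‖u‖_{N^{1,p}(Ω, d̂_a, μ̂_a)} ≤ ‖u‖_{N^{1,p}(Ω, d, μ)}; in particular N^{1,p}(Ω,d,μ) ⊂ N^{1,p}(Ω, d̂_a, μ̂_a). Moreover, if Ω is bounded in (X,d), then the two Newtonian spaces coincide as sets and have comparable norms. -/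
/-!
With `w x = (1 + d(x,a))⁻²`, the sphericalized arc length is `w ds` and `μ̂ₐ = w ^ p μ`.
Hence `g` is an upper gradient of `u` for `(d, μ)` exactly when `g / w` is one for the
sphericalized data, and `∫ (g / w) ^ p w ^ p dμ = ∫ g ^ p dμ`: the two energy terms coincide.
Only the `Lᵖ` term differs, and there `w ^ p ≤ 1`, while `w ^ p ≥ (1 + R) ^ (-2p)` on
`Ω ⊆ B̄(a, R)`.
-/
open MeasureTheory Metric Set ENNReal Filter

/-- A (nonconstant, compact, rectifiable) curve with respect to a distance
function `D`, parameterized by arc length on `[0, len]`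
(so that it is `1`-Lipschitz with respect to `D`). -/
structure CurveD (Y : Type*) (D : Y → Y → ℝ) where
  toFun : ℝ → Y
  len : ℝ
  len_pos : 0 < len
  lip : ∀ s ∈ Set.Icc (0:ℝ) len, ∀ t ∈ Set.Icc (0:ℝ) len, D (toFun s) (toFun t) ≤ |s - t|

/-- The curve lies in the set `Ω`. -/
def CurveD.inSet {Y : Type*} {D : Y → Y → ℝ} (γ : CurveD Y D) (Ω : Set Y) : Prop :=
  ∀ t ∈ Set.Icc (0:ℝ) γ.len, γ.toFun t ∈ Ω

/-- Line integral `∫_γ ρ ds̃`, where the arc length element is `ds̃ = w ds`. -/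
noncomputable def lineInt {Y : Type*} {D : Y → Y → ℝ} (γ : CurveD Y D) (ρ w : Y → ℝ≥0∞) : ℝ≥0∞ :=
  ∫⁻ t in Set.Icc (0:ℝ) γ.len, ρ (γ.toFun t) * w (γ.toFun t)

/-- The `p`-modulus of a curve family `Γ`, with energy measure `μ` and arc
length weighted by `w`. -/
noncomputable def pMod {Y : Type*} [MeasurableSpace Y] {D : Y → Y → ℝ} (p : ℝ) (μ : Measure Y)
    (w : Y → ℝ≥0∞) (Γ : Set (CurveD Y D)) : ℝ≥0∞ :=
  ⨅ (ρ : Y → ℝ≥0∞) (_ : Measurable ρ) (_ : ∀ γ ∈ Γ, 1 ≤ lineInt γ ρ w), ∫⁻ y, ρ y ^ p ∂μ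

/-- The absolute value of an extended real, as an element of `[0,∞]`. -/
noncomputable def eAbs (x : EReal) : ℝ≥0∞ :=
  if max x (-x) = (⊤ : EReal) then ⊤ else ENNReal.ofReal (max x (-x)).toReal

/-- `g` is an upper gradient of `u : Ω → [-∞,∞]` (arc length weighted by `w`). -/
def IsUpperGradientOn {Y : Type*} (D : Y → Y → ℝ) (w : Y → ℝ≥0∞) (Ω : Set Y)
    (u : Y → EReal) (g : Y → ℝ≥0∞) : Prop :=
  ∀ γ : CurveD Y D, γ.inSet Ω →
    eAbs (u (γ.toFun γ.len) - u (γ.toFun 0)) ≤ lineInt γ g w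

/-- `g` is a `p`-weak upper gradient of `u` in `Ω`: the upper gradient
inequality holds along `p`-almost every curve. -/
def IsPWUGOn {Y : Type*} [MeasurableSpace Y] (D : Y → Y → ℝ) (p : ℝ) (μ : Measure Y)
    (w : Y → ℝ≥0∞) (Ω : Set Y) (u : Y → EReal) (g : Y → ℝ≥0∞) : Prop :=
  ∃ Γ₀ : Set (CurveD Y D), pMod p μ w Γ₀ = 0 ∧
    ∀ γ : CurveD Y D, γ.inSet Ω → γ ∉ Γ₀ →
      eAbs (u (γ.toFun γ.len) - u (γ.toFun 0)) ≤ lineInt γ g w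

/-- `g` has locally finite `p`-energy in `Ω`. -/
def IsLocLp {Y : Type*} [MetricSpace Y] [MeasurableSpace Y] (p : ℝ) (μ : Measure Y)
    (Ω : Set Y) (g : Y → ℝ≥0∞) : Prop :=
  ∀ x ∈ Ω, ∃ r > (0:ℝ), ∫⁻ y in Ω ∩ Metric.ball x r, g y ^ p ∂μ < ⊤

/-- `g` is the minimal `p`-weak upper gradient of `u` in `Ω`. -/
def IsMinimalPWUGOn {Y : Type*} [MetricSpace Y] [MeasurableSpace Y] (D : Y → Y → ℝ) (p : ℝ)
    (μ : Measure Y) (w : Y → ℝ≥0∞) (Ω : Set Y) (u : Y → EReal) (g : Y → ℝ≥0∞) : Prop :=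
  IsPWUGOn D p μ w Ω u g ∧ IsLocLp p μ Ω g ∧
    ∀ h : Y → ℝ≥0∞, IsPWUGOn D p μ w Ω u h → IsLocLp p μ Ω h →
      ∀ᵐ x ∂(μ.restrict Ω), g x ≤ h x

/-- The `p`-th power of the Newtonian norm of `u` on `Ω`. -/
noncomputable def NpNormP {Y : Type*} [MeasurableSpace Y] (D : Y → Y → ℝ) (p : ℝ)
    (μ : Measure Y) (w : Y → ℝ≥0∞) (Ω : Set Y) (u : Y → EReal) : ℝ≥0∞ :=
  (∫⁻ x in Ω, eAbs (u x) ^ p ∂μ) +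
    ⨅ (g : Y → ℝ≥0∞) (_ : IsUpperGradientOn D w Ω u g), ∫⁻ x in Ω, g x ^ p ∂μ

/-- The Sobolev capacity of `E`. -/
noncomputable def sobCap {Y : Type*} [MeasurableSpace Y] (D : Y → Y → ℝ) (p : ℝ)
    (μ : Measure Y) (w : Y → ℝ≥0∞) (E : Set Y) : ℝ≥0∞ :=
  ⨅ (u : Y → EReal) (_ : ∀ x ∈ E, 1 ≤ u x), NpNormP D p μ w Set.univ u

/-- The sphericalized arc length weight `ds̃ = ds/(1+d(x,a))²`. -/
noncomputable def hatW {X : Type*} [MetricSpace X] (a : X) : X → ℝ≥0∞ :=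
  fun x => ENNReal.ofReal ((1 + dist x a) ^ 2)⁻¹

/-- The sphericalization measure `dμ̂ₐ = dμ/(1+d(x,a))^{2p}`. -/
noncomputable def muHat {X : Type*} [MetricSpace X] [MeasurableSpace X] (μ : Measure X)
    (a : X) (p : ℝ) : Measure X :=
  μ.withDensity fun x => ENNReal.ofReal ((1 + dist x a) ^ (2 * p))⁻¹

/-- A `q`-Poincaré inequality for `(X,d,μ)`. -/
def PoincareIneqP {X : Type*} [MetricSpace X] [MeasurableSpace X] (q : ℝ) (μ : Measure X) : Prop :=
  ∃ C > (0:ℝ), ∃ lam ≥ (1:ℝ), ∀ (u : X → ℝ) (g : X → ℝ≥0∞), Measurable u → Measurable g →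
    MeasureTheory.LocallyIntegrable u μ →
    IsUpperGradientOn dist (fun _ => 1) Set.univ (fun x => (u x : EReal)) g →
    ∀ (x : X) (r : ℝ), 0 < r →
      ⨍⁻ y in Metric.ball x r, ENNReal.ofReal |u y - ⨍ z in Metric.ball x r, u z ∂μ| ∂μ ≤
        ENNReal.ofReal (C * Metric.diam (Metric.ball x r)) *
          (⨍⁻ y in Metric.ball x (lam * r), g y ^ q ∂μ) ^ (1/q)

/-- `μ` is doubling and all balls have positive finite measure. -/
def DoublingMeas {X : Type*} [MetricSpace X] [MeasurableSpace X] (μ : Measure X) : Prop :=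
  (∀ (x : X) (r : ℝ), 0 < r → 0 < μ (Metric.ball x r) ∧ μ (Metric.ball x r) < ⊤) ∧
    ∃ C > (0:ℝ), ∀ (x : X) (r : ℝ), 0 < r →
      μ (Metric.ball x (2 * r)) ≤ ENNReal.ofReal C * μ (Metric.ball x r)

/-- `μ` is Ahlfors `Q`-regular. -/
def AhlforsRegular {X : Type*} [MetricSpace X] [MeasurableSpace X] (μ : Measure X) (Q : ℝ) : Prop :=
  ∃ C > (0:ℝ), ∀ (x : X) (r : ℝ), 0 < r →
    ENNReal.ofReal (C⁻¹ * r ^ Q) ≤ μ (Metric.ball x r) ∧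
      μ (Metric.ball x r) ≤ ENNReal.ofReal (C * r ^ Q)

section UpperGradient

variable {Y : Type*}

theorem lineInt_mul {D : Y → Y → ℝ} (γ : CurveD Y D) (ρ v w : Y → ℝ≥0∞) :
    lineInt γ (ρ * v) w = lineInt γ ρ (v * w) := by
  simp only [lineInt, Pi.mul_apply, mul_assoc]

theorem isUpperGradientOn_mul_iff {D : Y → Y → ℝ} {w : Y → ℝ≥0∞} {Ω : Set Y} {u : Y → EReal}
    {g v : Y → ℝ≥0∞} :
    IsUpperGradientOn D w Ω u (g * v) ↔ IsUpperGradientOn D (v * w) Ω u g := by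
  simp only [IsUpperGradientOn, lineInt_mul]

variable [MeasurableSpace Y]

noncomputable def upperGradientEnergy (D : Y → Y → ℝ) (p : ℝ) (μ : Measure Y)
    (w : Y → ℝ≥0∞) (Ω : Set Y) (u : Y → EReal) : ℝ≥0∞ :=
  ⨅ (g : Y → ℝ≥0∞) (_ : IsUpperGradientOn D w Ω u g), ∫⁻ x in Ω, g x ^ p ∂μ

theorem NpNormP_eq_add_upperGradientEnergy (D : Y → Y → ℝ) (p : ℝ) (μ : Measure Y)
    (w : Y → ℝ≥0∞) (Ω : Set Y) (u : Y → EReal) :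
    NpNormP D p μ w Ω u = (∫⁻ x in Ω, eAbs (u x) ^ p ∂μ) + upperGradientEnergy D p μ w Ω u :=
  rfl

theorem upperGradientEnergy_withDensity_rpow (D : Y → Y → ℝ) {p : ℝ} (hp : 0 ≤ p)
    (μ : Measure Y) {w : Y → ℝ≥0∞} (hw : Measurable w) (hw0 : ∀ x, w x ≠ 0)
    (hw_top : ∀ x, w x ≠ ∞) {Ω : Set Y} (hΩ : MeasurableSet Ω) (u : Y → EReal) :
    upperGradientEnergy D p (μ.withDensity fun x => w x ^ p) w Ω u =
      upperGradientEnergy D p μ 1 Ω u := by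
  have hint (g : Y → ℝ≥0∞) :
      ∫⁻ x in Ω, g x ^ p ∂μ.withDensity (fun x => w x ^ p) = ∫⁻ x in Ω, (g * w) x ^ p ∂μ := by
    rw [setLIntegral_withDensity_eq_setLIntegral_mul_non_measurable _ (by fun_prop) _ hΩ
      (ae_of_all _ fun x => ENNReal.rpow_lt_top_of_nonneg hp (hw_top x))]
    simp only [Pi.mul_apply, ENNReal.mul_rpow_of_nonneg _ _ hp, mul_comm]
  apply le_antisymm
  · refine le_iInf₂ fun g hg => ?_
    have hg' : IsUpperGradientOn D w Ω u (g * w⁻¹) := by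
      rwa [isUpperGradientOn_mul_iff,
        show w⁻¹ * w = 1 from funext fun x => ENNReal.inv_mul_cancel (hw0 x) (hw_top x)]
    refine (iInf₂_le _ hg').trans_eq ?_
    simp only [hint, Pi.mul_apply, Pi.inv_apply, mul_assoc,
      ENNReal.inv_mul_cancel (hw0 _) (hw_top _), mul_one]
  · refine le_iInf₂ fun g hg => ?_
    have hg' : IsUpperGradientOn D 1 Ω u (g * w) := by
      rwa [isUpperGradientOn_mul_iff, mul_one]
    exact (iInf₂_le _ hg').trans_eq (hint g).symm

end UpperGradient

theorem MeasureTheory.Measure.restrict_le_smul_restrict_withDensity {Y : Type*} [MeasurableSpace Y]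
    (μ : Measure Y) {Ω : Set Y} (hΩ : MeasurableSet Ω) {f : Y → ℝ≥0∞} {c : ℝ≥0∞}
    (hc : c ≠ ∞)
    (hcf : ∀ x ∈ Ω, 1 ≤ c * f x) :
    μ.restrict Ω ≤ c • (μ.withDensity f).restrict Ω := by
  calc μ.restrict Ω = (μ.restrict Ω).withDensity 1 := (withDensity_one).symm
    _ ≤ (μ.restrict Ω).withDensity (c • f) :=
      withDensity_mono ((ae_restrict_iff' hΩ).2 (ae_of_all _ hcf))
    _ = c • (μ.withDensity f).restrict Ω := by
      rw [withDensity_smul' _ _ hc, restrict_withDensity hΩ]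

section Sphericalization

variable {X : Type*} [MetricSpace X]

theorem measurable_hatW [MeasurableSpace X] [BorelSpace X] (a : X) : Measurable (hatW a) := by
  unfold hatW; fun_prop

theorem hatW_ne_zero (a x : X) : hatW a x ≠ 0 := by
  simp only [hatW, ne_eq, ENNReal.ofReal_eq_zero, not_le]; positivity

theorem hatW_ne_top (a x : X) : hatW a x ≠ ∞ := ENNReal.ofReal_ne_top

theorem hatW_le_one (a x : X) : hatW a x ≤ 1 :=
  ENNReal.ofReal_le_one.2 (inv_le_one_of_one_le₀ (one_le_pow₀ (by simp)))

theorem one_le_mul_hatW_of_dist_le {a x : X} {R : ℝ} (hx : dist x a ≤ R) :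
    1 ≤ ENNReal.ofReal ((1 + R) ^ 2) * hatW a x := by
  have hx0 : 0 < 1 + dist x a := by positivity
  rw [hatW, ← ENNReal.ofReal_mul (by positivity), ← div_eq_mul_inv, ENNReal.one_le_ofReal,
    one_le_div (by positivity)]
  gcongr

theorem muHat_eq_withDensity_hatW_rpow [MeasurableSpace X] (μ : Measure X) (a : X) {p : ℝ}
    (hp : 0 ≤ p) : muHat μ a p = μ.withDensity fun x => hatW a x ^ p := by
  refine congrArg μ.withDensity (funext fun x => ?_)
  have hx0 : 0 < 1 + dist x a := by positivity
  rw [hatW, ENNReal.ofReal_rpow_of_nonneg (by positivity) hp, Real.inv_rpow (by positivity),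
    ← Real.rpow_natCast, ← Real.rpow_mul hx0.le, Nat.cast_ofNat]

theorem muHat_le_self [MeasurableSpace X] (μ : Measure X) (a : X) {p : ℝ} (hp : 0 ≤ p) :
    muHat μ a p ≤ μ := by
  rw [muHat_eq_withDensity_hatW_rpow μ a hp]
  calc μ.withDensity (fun x => hatW a x ^ p) ≤ μ.withDensity 1 :=
        withDensity_mono (ae_of_all _ fun x => ENNReal.rpow_le_one (hatW_le_one a x) hp)
    _ = μ := withDensity_one

end Sphericalization

theorem Newtonian_norm_sphericalization_general {X : Type*} [MetricSpace X] [MeasurableSpace X]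
    [BorelSpace X] (μ : Measure X) (a : X) (p : ℝ) (hp : 1 < p)
    (Ω : Set X) (hΩ : IsOpen Ω) :
    (∀ u : X → EReal,
      NpNormP dist p (muHat μ a p) (hatW a) Ω u ≤ NpNormP dist p μ (fun _ => 1) Ω u) ∧
    (Bornology.IsBounded Ω → ∃ C : ℝ≥0∞, 1 ≤ C ∧ C < ⊤ ∧ ∀ u : X → EReal,
      NpNormP dist p μ (fun _ => 1) Ω u ≤ C * NpNormP dist p (muHat μ a p) (hatW a) Ω u) := by
  have hp0 : 0 ≤ p := by linarith
  have henergy (u : X → EReal) : upperGradientEnergy dist p (muHat μ a p) (hatW a) Ω u =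
      upperGradientEnergy dist p μ (fun _ => 1) Ω u := by
    rw [muHat_eq_withDensity_hatW_rpow μ a hp0]
    exact upperGradientEnergy_withDensity_rpow dist hp0 μ (measurable_hatW a) (hatW_ne_zero a)
      (hatW_ne_top a) hΩ.measurableSet u
  refine ⟨fun u => ?_, fun hΩb => ?_⟩
  · rw [NpNormP_eq_add_upperGradientEnergy, NpNormP_eq_add_upperGradientEnergy, henergy]
    gcongr ?_ + _
    exact lintegral_mono' (Measure.restrict_mono subset_rfl (muHat_le_self μ a hp0)) le_rfl
  obtain ⟨R, hR0, hΩR⟩ := hΩb.subset_closedBall_lt 0 a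
  set C := ENNReal.ofReal ((1 + R) ^ 2) ^ p
  have hC_top : C ≠ ∞ := ENNReal.rpow_ne_top_of_nonneg hp0 ENNReal.ofReal_ne_top
  have hC_one : 1 ≤ C :=
    ENNReal.one_le_rpow (ENNReal.one_le_ofReal.2 (by nlinarith)) (by linarith)
  have hμ : μ.restrict Ω ≤ C • (muHat μ a p).restrict Ω := by
    rw [muHat_eq_withDensity_hatW_rpow μ a hp0]
    refine Measure.restrict_le_smul_restrict_withDensity μ hΩ.measurableSet hC_top fun x hx => ?_
    rw [← ENNReal.mul_rpow_of_nonneg _ _ hp0]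
    exact ENNReal.one_le_rpow (one_le_mul_hatW_of_dist_le (hΩR hx)) (by linarith)
  refine ⟨C, hC_one, hC_top.lt_top, fun u => ?_⟩
  rw [NpNormP_eq_add_upperGradientEnergy, NpNormP_eq_add_upperGradientEnergy, henergy, mul_add]
  gcongr
  · exact (lintegral_mono' hμ le_rfl).trans_eq (lintegral_smul_measure C _)
  · exact le_mul_of_one_le_left zero_le hC_one

/-- The Newtonian norm does not increase under sphericalization:
`‖u‖_{N^{1,p}(Ω,d̂_a,μ̂_a)} ≤ ‖u‖_{N^{1,p}(Ω,d,μ)}` (so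
`N^{1,p}(Ω,d,μ) ⊂ N^{1,p}(Ω,d̂_a,μ̂_a)`), and if `Ω` is bounded the two
Newtonian spaces coincide with comparable norms. -/
theorem Newtonian_norm_sphericalization {X : Type*} [MetricSpace X] [MeasurableSpace X]
    [BorelSpace X] (μ : Measure X) (a : X) (p : ℝ) (hp : 1 < p)
    (hunb : ¬ Bornology.IsBounded (Set.univ : Set X))
    (Ω : Set X) (hΩ : IsOpen Ω) :
    (∀ u : X → EReal,
      NpNormP dist p (muHat μ a p) (hatW a) Ω u ≤ NpNormP dist p μ (fun _ => 1) Ω u) ∧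
    (Bornology.IsBounded Ω → ∃ C : ℝ≥0∞, 1 ≤ C ∧ C < ⊤ ∧ ∀ u : X → EReal,
      NpNormP dist p μ (fun _ => 1) Ω u ≤ C * NpNormP dist p (muHat μ a p) (hatW a) Ω u) :=
  Newtonian_norm_sphericalization_general μ a p hp Ω hΩ
end

section
/- Let (X,d,μ) be a metric measure space, Ω ⊂ X open, a ∈ X, p > 1, and let (Ẋ, d̂_a, μ̂_a) be the sphericalization with dμ̂_a(x) = dμ(x)/(1+d(x,a))^{2p}. A function u: Ω → ℝ is a p-superminimizer in Ω with respect to (d,μ) if and only if it is a p-superminimizer in Ω with respect to (d̂_a, μ̂_a). The same holds for minimizers, and hence p-harmonicity (continuous minimizers) and superharmonicity are preserved under sphericalization. -/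
open MeasureTheory Metric Set ENNReal Filter

/-- `u` is a `p`-superminimizer in `Ω`: for all nonnegative Lipschitz `φ`
with compact support in `Ω`, `∫_{φ≠0} g_u^p dμ ≤ ∫_{φ≠0} g_{u+φ}^p dμ`. -/
def IsSuperminimizerOn {X : Type*} [MetricSpace X] [MeasurableSpace X] (D : X → X → ℝ)
    (p : ℝ) (μ : Measure X) (w : X → ℝ≥0∞) (Ω : Set X) (u : X → ℝ) : Prop :=
  ∀ φ : X → ℝ, (∃ K : NNReal, LipschitzWith K φ) → HasCompactSupport φ →
    tsupport φ ⊆ Ω → (∀ x, 0 ≤ φ x) →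
    ∀ g gφ : X → ℝ≥0∞,
      IsMinimalPWUGOn D p μ w Ω (fun x => (u x : EReal)) g →
      IsMinimalPWUGOn D p μ w Ω (fun x => ((u x + φ x : ℝ) : EReal)) gφ →
      ∫⁻ x in {x | φ x ≠ 0}, g x ^ p ∂μ ≤ ∫⁻ x in {x | φ x ≠ 0}, gφ x ^ p ∂μ

/-- `u` is a `p`-minimizer in `Ω` (test functions of arbitrary sign). -/
def IsMinimizerOn {X : Type*} [MetricSpace X] [MeasurableSpace X] (D : X → X → ℝ)
    (p : ℝ) (μ : Measure X) (w : X → ℝ≥0∞) (Ω : Set X) (u : X → ℝ) : Prop :=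
  ∀ φ : X → ℝ, (∃ K : NNReal, LipschitzWith K φ) → HasCompactSupport φ →
    tsupport φ ⊆ Ω →
    ∀ g gφ : X → ℝ≥0∞,
      IsMinimalPWUGOn D p μ w Ω (fun x => (u x : EReal)) g →
      IsMinimalPWUGOn D p μ w Ω (fun x => ((u x + φ x : ℝ) : EReal)) gφ →
      ∫⁻ x in {x | φ x ≠ 0}, g x ^ p ∂μ ≤ ∫⁻ x in {x | φ x ≠ 0}, gφ x ^ p ∂μ

/-- The lsc-regularization `u*(x) = lim_{r→0} essinf_{B(x,r)} u`. -/
noncomputable def lscReg {X : Type*} [MetricSpace X] [MeasurableSpace X]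
    (μ : Measure X) (u : X → EReal) (x : X) : EReal :=
  ⨆ (r : ℝ) (_ : 0 < r), essInf u (μ.restrict (Metric.ball x r))

/-- `u : Ω → (-∞,∞]` is superharmonic: lsc-regularized and all truncations
`min{u,k}` are superminimizers. -/
def IsSuperharmonicOn {X : Type*} [MetricSpace X] [MeasurableSpace X] (D : X → X → ℝ)
    (p : ℝ) (μ : Measure X) (w : X → ℝ≥0∞) (Ω : Set X) (u : X → EReal) : Prop :=
  (∀ x ∈ Ω, u x ≠ ⊥) ∧ (∀ x ∈ Ω, u x = lscReg (μ.restrict Ω) u x) ∧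
  ∀ k : ℤ, IsSuperminimizerOn D p μ w Ω (fun x => (min (u x) ((k : ℝ) : EReal)).toReal)

/-!
Sphericalization is a conformal change of `(X, d, μ)`: arc length is weighted by
`w = (1 + d(·, a))⁻²` and the measure by `w ^ p`. For any measurable weight with values in
`(0, ∞)`, multiplication `ρ ↦ ρ w` turns `w`-weighted line integrals into plain ones and
`∫_S ρ^p d(w^p μ)` into `∫_S (ρ w)^p dμ` on every measurable `S`. Being invertible, it matches
admissible functions, hence `p`-moduli and `p`-weak upper gradients, of the two structures;
since `w^p μ` and `μ` have the same null sets, it also matches minimal `p`-weak upper gradients,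
`g_u = ĝ_u w`. So the energies compared in the definitions of (super)minimizers agree, and the
lsc-regularization, which only sees null sets, is unchanged.
-/

structure IsConformalWeight {X : Type*} [MeasurableSpace X] (w : X → ℝ≥0∞) : Prop where
  measurable : Measurable w
  ne_zero : ∀ x, w x ≠ 0
  ne_top : ∀ x, w x ≠ ⊤

lemma lineInt_mul_weight {Y : Type*} {D : Y → Y → ℝ} (γ : CurveD Y D) (ρ w : Y → ℝ≥0∞) :
    lineInt γ (fun x => ρ x * w x) (fun _ => 1) = lineInt γ ρ w := by
  simp only [lineInt, mul_one]

/-- `IsSuperminimizerOn` and `IsMinimizerOn` unfold to this comparison with `S = {φ ≠ 0}` and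
`v = u + φ`, for all admissible test functions `φ`. -/
def MinimalEnergyLEOn {X : Type*} [MetricSpace X] [MeasurableSpace X] (D : X → X → ℝ) (p : ℝ)
    (μ : Measure X) (w : X → ℝ≥0∞) (Ω S : Set X) (u v : X → EReal) : Prop :=
  ∀ g h : X → ℝ≥0∞, IsMinimalPWUGOn D p μ w Ω u g → IsMinimalPWUGOn D p μ w Ω v h →
    ∫⁻ x in S, g x ^ p ∂μ ≤ ∫⁻ x in S, h x ^ p ∂μ

lemma lscReg_congr_ae {X : Type*} [MetricSpace X] [MeasurableSpace X] [OpensMeasurableSpace X]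
    {ν ν' : Measure X} (h : ae ν = ae ν') (u : X → EReal) : lscReg ν u = lscReg ν' u := by
  funext x
  refine iSup_congr fun r => iSup_congr fun _ => ?_
  simp only [essInf, ae_restrict_eq measurableSet_ball, h]

namespace IsConformalWeight

variable {X : Type*} [MeasurableSpace X] {w : X → ℝ≥0∞}

lemma mul_inv_mul (hw : IsConformalWeight w) (c : ℝ≥0∞) (x : X) : c * (w x)⁻¹ * w x = c := by
  rw [mul_assoc, ENNReal.inv_mul_cancel (hw.ne_zero x) (hw.ne_top x), mul_one]

lemma ae_withDensity_rpow (hw : IsConformalWeight w) (μ : Measure X) (p : ℝ) :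
    ae (μ.withDensity (w · ^ p)) = ae μ := by
  refine le_antisymm (withDensity_absolutelyContinuous μ _).ae_le
    (withDensity_absolutelyContinuous' (hw.measurable.pow_const p).aemeasurable
      (Eventually.of_forall fun x => ?_)).ae_le
  exact (ENNReal.rpow_pos (pos_iff_ne_zero.2 (hw.ne_zero x)) (hw.ne_top x)).ne'

lemma ae_restrict_withDensity_rpow (hw : IsConformalWeight w) (μ : Measure X) (p : ℝ)
    {Ω : Set X} (hΩ : MeasurableSet Ω) :
    ae ((μ.withDensity (w · ^ p)).restrict Ω) = ae (μ.restrict Ω) := by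
  rw [restrict_withDensity hΩ, hw.ae_withDensity_rpow]

lemma setLIntegral_mul_rpow (hw : IsConformalWeight w) (μ : Measure X) (p : ℝ)
    (ρ : X → ℝ≥0∞) {S : Set X} (hS : MeasurableSet S) :
    ∫⁻ x in S, (ρ x * w x) ^ p ∂μ = ∫⁻ x in S, ρ x ^ p ∂μ.withDensity (w · ^ p) := by
  rw [setLIntegral_withDensity_eq_setLIntegral_mul_non_measurable _
    (hw.measurable.pow_const p) _ hS (Eventually.of_forall fun x =>
      (ENNReal.rpow_ne_top_of_ne_zero (hw.ne_zero x) (hw.ne_top x)).lt_top)]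
  refine lintegral_congr fun x => ?_
  simp [ENNReal.mul_rpow_eq_ite, hw.ne_zero x, hw.ne_top x, mul_comm]

lemma lintegral_mul_rpow (hw : IsConformalWeight w) (μ : Measure X) (p : ℝ)
    (ρ : X → ℝ≥0∞) :
    ∫⁻ x, (ρ x * w x) ^ p ∂μ = ∫⁻ x, ρ x ^ p ∂μ.withDensity (w · ^ p) := by
  simpa only [Measure.restrict_univ] using hw.setLIntegral_mul_rpow μ p ρ MeasurableSet.univ

variable {D : X → X → ℝ} {p : ℝ} {μ : Measure X}

lemma pMod_withDensity (hw : IsConformalWeight w) (Γ : Set (CurveD X D)) :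
    pMod p (μ.withDensity (w · ^ p)) w Γ = pMod p μ (fun _ => 1) Γ := by
  apply le_antisymm
  · refine le_iInf₂ fun ρ hρ => le_iInf fun hadm => ?_
    refine iInf₂_le_of_le (fun x => ρ x * (w x)⁻¹) (hρ.mul hw.measurable.inv) <|
      iInf_le_of_le (fun γ hγ => ?_) ?_
    · rw [← lineInt_mul_weight]
      simpa only [hw.mul_inv_mul] using hadm γ hγ
    · simp only [← hw.lintegral_mul_rpow, hw.mul_inv_mul, le_rfl]
  · refine le_iInf₂ fun ρ hρ => le_iInf fun hadm => ?_
    refine iInf₂_le_of_le (fun x => ρ x * w x) (hρ.mul hw.measurable) <|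
      iInf_le_of_le (fun γ hγ => ?_) (hw.lintegral_mul_rpow μ p ρ).le
    rw [lineInt_mul_weight]
    exact hadm γ hγ

lemma isPWUGOn_withDensity_iff (hw : IsConformalWeight w) (Ω : Set X) (u : X → EReal)
    (g : X → ℝ≥0∞) :
    IsPWUGOn D p (μ.withDensity (w · ^ p)) w Ω u g ↔
      IsPWUGOn D p μ (fun _ => 1) Ω u (fun x => g x * w x) := by
  simp only [IsPWUGOn, hw.pMod_withDensity, lineInt_mul_weight]

variable [MetricSpace X] [OpensMeasurableSpace X] {Ω : Set X}

lemma isLocLp_withDensity_iff (hw : IsConformalWeight w) (hΩ : MeasurableSet Ω)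
    (g : X → ℝ≥0∞) :
    IsLocLp p (μ.withDensity (w · ^ p)) Ω g ↔ IsLocLp p μ Ω (fun x => g x * w x) := by
  simp only [IsLocLp, hw.setLIntegral_mul_rpow μ p _ (hΩ.inter measurableSet_ball)]

lemma isMinimalPWUGOn_withDensity_iff (hw : IsConformalWeight w) (hΩ : MeasurableSet Ω)
    (u : X → EReal) (g : X → ℝ≥0∞) :
    IsMinimalPWUGOn D p (μ.withDensity (w · ^ p)) w Ω u g ↔
      IsMinimalPWUGOn D p μ (fun _ => 1) Ω u (fun x => g x * w x) := by
  unfold IsMinimalPWUGOn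
  rw [hw.isPWUGOn_withDensity_iff, hw.isLocLp_withDensity_iff hΩ,
    hw.ae_restrict_withDensity_rpow μ p hΩ]
  refine and_congr_right fun _ => and_congr_right fun _ => ⟨fun hmin h hpw hlp => ?_, ?_⟩
  · have hh : (fun x => h x * (w x)⁻¹ * w x) = h := funext fun x => hw.mul_inv_mul _ x
    have hle := hmin (fun x => h x * (w x)⁻¹)
      (by rwa [hw.isPWUGOn_withDensity_iff, hh]) (by rwa [hw.isLocLp_withDensity_iff hΩ, hh])
    filter_upwards [hle] with x hx
    rwa [← ENNReal.le_div_iff_mul_le (.inl (hw.ne_zero x)) (.inl (hw.ne_top x))]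
  · intro hmin h hpw hlp
    filter_upwards [hmin _ (hw.isPWUGOn_withDensity_iff Ω u h |>.1 hpw)
      (hw.isLocLp_withDensity_iff hΩ h |>.1 hlp)] with x hx
    exact (ENNReal.mul_le_mul_iff_left (hw.ne_zero x) (hw.ne_top x)).1 hx

lemma minimalEnergyLEOn_withDensity_iff (hw : IsConformalWeight w) (hΩ : MeasurableSet Ω)
    {S : Set X} (hS : MeasurableSet S) (u v : X → EReal) :
    MinimalEnergyLEOn D p μ (fun _ => 1) Ω S u v ↔
      MinimalEnergyLEOn D p (μ.withDensity (w · ^ p)) w Ω S u v := by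
  refine ⟨fun hle g h hg hh => ?_, fun hle g h hg hh => ?_⟩
  · rw [← hw.setLIntegral_mul_rpow μ p _ hS, ← hw.setLIntegral_mul_rpow μ p _ hS]
    exact hle _ _ ((hw.isMinimalPWUGOn_withDensity_iff hΩ u g).1 hg)
      ((hw.isMinimalPWUGOn_withDensity_iff hΩ v h).1 hh)
  · have hg' := (hw.isMinimalPWUGOn_withDensity_iff hΩ u fun x => g x * (w x)⁻¹).2
      (by simpa only [hw.mul_inv_mul] using hg)
    have hh' := (hw.isMinimalPWUGOn_withDensity_iff hΩ v fun x => h x * (w x)⁻¹).2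
      (by simpa only [hw.mul_inv_mul] using hh)
    simpa only [← hw.setLIntegral_mul_rpow μ p _ hS, hw.mul_inv_mul] using hle _ _ hg' hh'

lemma isSuperminimizerOn_withDensity_iff (hw : IsConformalWeight w) (hΩ : MeasurableSet Ω)
    (u : X → ℝ) :
    IsSuperminimizerOn D p μ (fun _ => 1) Ω u ↔
      IsSuperminimizerOn D p (μ.withDensity (w · ^ p)) w Ω u :=
  forall_congr' fun _ => imp_congr_right fun ⟨_, hφ⟩ => imp_congr_right fun _ =>
    imp_congr_right fun _ => imp_congr_right fun _ =>
      hw.minimalEnergyLEOn_withDensity_iff hΩ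
        (hφ.continuous.measurable (measurableSet_singleton 0).compl) _ _

lemma isMinimizerOn_withDensity_iff (hw : IsConformalWeight w) (hΩ : MeasurableSet Ω)
    (u : X → ℝ) :
    IsMinimizerOn D p μ (fun _ => 1) Ω u ↔ IsMinimizerOn D p (μ.withDensity (w · ^ p)) w Ω u :=
  forall_congr' fun _ => imp_congr_right fun ⟨_, hφ⟩ => imp_congr_right fun _ =>
    imp_congr_right fun _ =>
      hw.minimalEnergyLEOn_withDensity_iff hΩ
        (hφ.continuous.measurable (measurableSet_singleton 0).compl) _ _

lemma isSuperharmonicOn_withDensity_iff (hw : IsConformalWeight w) (hΩ : MeasurableSet Ω)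
    (u : X → EReal) :
    IsSuperharmonicOn D p μ (fun _ => 1) Ω u ↔
      IsSuperharmonicOn D p (μ.withDensity (w · ^ p)) w Ω u := by
  simp only [IsSuperharmonicOn, hw.isSuperminimizerOn_withDensity_iff hΩ,
    lscReg_congr_ae (hw.ae_restrict_withDensity_rpow μ p hΩ)]

end IsConformalWeight

section Sphericalization

variable {X : Type*} [MetricSpace X]

lemma isConformalWeight_hatW [MeasurableSpace X] [OpensMeasurableSpace X] (a : X) :
    IsConformalWeight (hatW a) where
  measurable := by unfold hatW; fun_prop
  ne_zero x := by simp only [hatW, ne_eq, ENNReal.ofReal_eq_zero, not_le]; positivity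
  ne_top _ := ENNReal.ofReal_ne_top

lemma hatW_rpow (a x : X) (p : ℝ) :
    hatW a x ^ p = ENNReal.ofReal ((1 + dist x a) ^ (2 * p))⁻¹ := by
  have hpos : 0 < 1 + dist x a := by positivity
  rw [hatW, ENNReal.ofReal_rpow_of_pos (by positivity), Real.inv_rpow (by positivity),
    ← Real.rpow_natCast, ← Real.rpow_mul hpos.le, Nat.cast_ofNat]

lemma muHat_eq_withDensity [MeasurableSpace X] (μ : Measure X) (a : X) (p : ℝ) :
    muHat μ a p = μ.withDensity (hatW a · ^ p) := by
  simp only [muHat, hatW_rpow]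

end Sphericalization

theorem superminimizer_sphericalization_invariant_general {X : Type*} [MetricSpace X]
    [MeasurableSpace X] [BorelSpace X] (μ : Measure X) (a : X) (p : ℝ)
    (Ω : Set X) (hΩ : IsOpen Ω) :
    (∀ u : X → ℝ,
      IsSuperminimizerOn dist p μ (fun _ => 1) Ω u ↔
        IsSuperminimizerOn dist p (muHat μ a p) (hatW a) Ω u) ∧
    (∀ u : X → ℝ,
      IsMinimizerOn dist p μ (fun _ => 1) Ω u ↔
        IsMinimizerOn dist p (muHat μ a p) (hatW a) Ω u) ∧
    (∀ u : X → ℝ,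
      (ContinuousOn u Ω ∧ IsMinimizerOn dist p μ (fun _ => 1) Ω u) ↔
        (ContinuousOn u Ω ∧ IsMinimizerOn dist p (muHat μ a p) (hatW a) Ω u)) ∧
    (∀ u : X → EReal,
      IsSuperharmonicOn dist p μ (fun _ => 1) Ω u ↔
        IsSuperharmonicOn dist p (muHat μ a p) (hatW a) Ω u) := by
  have hw := isConformalWeight_hatW a
  have hΩm := hΩ.measurableSet
  rw [muHat_eq_withDensity]
  exact ⟨hw.isSuperminimizerOn_withDensity_iff hΩm, hw.isMinimizerOn_withDensity_iff hΩm,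
    fun u => and_congr_right' (hw.isMinimizerOn_withDensity_iff hΩm u),
    hw.isSuperharmonicOn_withDensity_iff hΩm⟩

/-- Superminimizers, minimizers, `p`-harmonic functions and superharmonic
functions in `Ω ⊂ X` are the same with respect to `(d,μ)` and with respect
to the sphericalization `(d̂_a, μ̂_a)`. -/
theorem superminimizer_sphericalization_invariant {X : Type*} [MetricSpace X]
    [MeasurableSpace X] [BorelSpace X] (μ : Measure X) (a : X) (p : ℝ) (hp : 1 < p)
    (Ω : Set X) (hΩ : IsOpen Ω) :
    (∀ u : X → ℝ,
      IsSuperminimizerOn dist p μ (fun _ => 1) Ω u ↔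
        IsSuperminimizerOn dist p (muHat μ a p) (hatW a) Ω u) ∧
    (∀ u : X → ℝ,
      IsMinimizerOn dist p μ (fun _ => 1) Ω u ↔
        IsMinimizerOn dist p (muHat μ a p) (hatW a) Ω u) ∧
    (∀ u : X → ℝ,
      (ContinuousOn u Ω ∧ IsMinimizerOn dist p μ (fun _ => 1) Ω u) ↔
        (ContinuousOn u Ω ∧ IsMinimizerOn dist p (muHat μ a p) (hatW a) Ω u)) ∧
    (∀ u : X → EReal,
      IsSuperharmonicOn dist p μ (fun _ => 1) Ω u ↔
        IsSuperharmonicOn dist p (muHat μ a p) (hatW a) Ω u) :=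
  superminimizer_sphericalization_invariant_general μ a p Ω hΩ
end
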